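/- Let Φ be a quantum channel (completely positive trace-preserving map) on H_n that acts on at most k qudits, i.e., there exists I ⊆ [n] with |I| ≤ k such that Φ = Φ_I ⊗ id for a channel Φ_I on the qudits in I. Then for any quantum state ρ ∈ S_n, ‖Φ(ρ) − ρ‖_{W1} ≤ 2k · (d² − 1)/d². -/

import Mathlib

open scoped BigOperators
open scoped Classical
open scoped ComplexOrder

noncomputable section

namespace QW1

/-- Configurations of `n` qudits of local dimension `d`:
the index set of the canonical basis of `(ℂ^d)^{⊗ n}`. -/
abbrev Cfg (d n : ℕ) : Type := Fin n → Fin d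

/-- Linear operators on the Hilbert space of `n` qudits, represented as matrices
in the canonical basis. -/
abbrev Mat (d n : ℕ) : Type := Matrix (Cfg d n) (Cfg d n) ℂ

/-- The trace norm `‖A‖₁ = Tr √(Aᴴ A)`. -/
noncomputable def traceNorm {ι : Type} [Fintype ι] [DecidableEq ι] (A : Matrix ι ι ℂ) : ℝ :=
  (((Matrix.posSemidef_conjTranspose_mul_self A).1.eigenvectorUnitary.1 *
      Matrix.diagonal (((↑) : ℝ → ℂ) ∘ (√·) ∘ (Matrix.posSemidef_conjTranspose_mul_self A).1.eigenvalues) *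
      (star (Matrix.posSemidef_conjTranspose_mul_self A).1.eigenvectorUnitary :
        Matrix ι ι ℂ)).trace).re

/-- The operator norm `‖A‖_∞`. -/
noncomputable def opNorm {ι : Type} [Fintype ι] [DecidableEq ι] (A : Matrix ι ι ℂ) : ℝ :=
  ‖Matrix.toEuclideanCLM (𝕜 := ℂ) A‖

/-- Quantum states: positive semidefinite operators with unit trace. -/
def IsState {ι : Type} [Fintype ι] (ρ : Matrix ι ι ℂ) : Prop :=
  ρ.PosSemidef ∧ ρ.trace = 1

/-- Insert the value `s` at position `i` into a configuration `a` of the remaining qudits. -/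
def ins {d n : ℕ} (i : Fin n) (a : {j : Fin n // j ≠ i} → Fin d) (s : Fin d) : Cfg d n :=
  fun j => if h : j = i then s else a ⟨j, h⟩

/-- The partial trace over the `i`-th qudit. -/
noncomputable def ptrace {d n : ℕ} (i : Fin n) (X : Mat d n) :
    Matrix ({j : Fin n // j ≠ i} → Fin d) ({j : Fin n // j ≠ i} → Fin d) ℂ :=
  fun a b => ∑ s : Fin d, X (ins i a s) (ins i b s)

/-- The marginal of `ρ` on the `i`-th qudit (partial trace over all the other qudits). -/
noncomputable def marginal {d n : ℕ} (i : Fin n) (ρ : Mat d n) :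
    Matrix (Fin d) (Fin d) ℂ :=
  fun s t => ∑ a : ({j : Fin n // j ≠ i} → Fin d), ρ (ins i a s) (ins i a t)

/-- Combine a configuration `s` of the qudits in `I` with a configuration `a` of the rest. -/
def insSet {d n : ℕ} (I : Finset (Fin n)) (a : {j : Fin n // j ∉ I} → Fin d)
    (s : {j : Fin n // j ∈ I} → Fin d) : Cfg d n :=
  fun j => if h : j ∈ I then s ⟨j, h⟩ else a ⟨j, h⟩

/-- The partial trace over the qudits in `I`. -/
noncomputable def ptraceSet {d n : ℕ} (I : Finset (Fin n)) (X : Mat d n) :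
    Matrix ({j : Fin n // j ∉ I} → Fin d) ({j : Fin n // j ∉ I} → Fin d) ℂ :=
  fun a b => ∑ s : ({j : Fin n // j ∈ I} → Fin d), X (insSet I a s) (insSet I b s)

/-- The set of values `(1/2) ∑ i ‖X⁽ⁱ⁾‖₁` over all decompositions `X = ∑ i X⁽ⁱ⁾` with
`X⁽ⁱ⁾` self-adjoint and `Tr_i X⁽ⁱ⁾ = 0`. -/
def W1Set {d n : ℕ} (X : Mat d n) : Set ℝ :=
  { r | ∃ Y : Fin n → Mat d n, (∀ i, (Y i).IsHermitian) ∧ (∀ i, ptrace i (Y i) = 0) ∧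
      X = ∑ i, Y i ∧ r = (1 / 2) * ∑ i, traceNorm (Y i) }

/-- The quantum `W₁` norm. -/
noncomputable def W1 {d n : ℕ} (X : Mat d n) : ℝ := sInf (W1Set X)

/-- The quantum Lipschitz constant: the dual norm of the quantum `W₁` norm. -/
noncomputable def lipschitz {d n : ℕ} (H : Mat d n) : ℝ :=
  sSup { r | ∃ X : Mat d n, X.IsHermitian ∧ X.trace = 0 ∧ W1 X ≤ 1 ∧
    r = ((H * X).trace).re }

/-- Extension `Φ ⊗ id_R` of a map on matrices. -/
def extendMap {A B R : Type} [Fintype A] [Fintype B] [Fintype R]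
    (Φ : Matrix A A ℂ → Matrix B B ℂ) (M : Matrix (A × R) (A × R) ℂ) :
    Matrix (B × R) (B × R) ℂ :=
  fun p q => Φ (fun a a' => M (a, p.2) (a', q.2)) p.1 q.1

/-- Quantum channels: completely positive trace-preserving linear maps. -/
def IsCPTP {A B : Type} [Fintype A] [Fintype B]
    (Φ : Matrix A A ℂ →ₗ[ℂ] Matrix B B ℂ) : Prop :=
  (∀ (k : ℕ) (M : Matrix (A × Fin k) (A × Fin k) ℂ), M.PosSemidef →
    (extendMap (fun N => Φ N) M).PosSemidef) ∧
  ∀ M, (Φ M).trace = M.trace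

/-- Action `φ_i ⊗ id` of a single-qudit map `φ` on the `i`-th qudit of `n` qudits. -/
def applyAt {d n : ℕ} (i : Fin n) (φ : Matrix (Fin d) (Fin d) ℂ → Matrix (Fin d) (Fin d) ℂ)
    (X : Mat d n) : Mat d n :=
  fun a b => φ (fun s t => X (Function.update a i s) (Function.update b i t)) (a i) (b i)

/-- Action `φ_I ⊗ id` of a map `φ` on the qudits in `I`. -/
def applyOn {d n : ℕ} (I : Finset (Fin n))
    (φ : Matrix ({j : Fin n // j ∈ I} → Fin d) ({j : Fin n // j ∈ I} → Fin d) ℂ →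
         Matrix ({j : Fin n // j ∈ I} → Fin d) ({j : Fin n // j ∈ I} → Fin d) ℂ)
    (X : Mat d n) : Mat d n :=
  fun a b =>
    φ (fun s t => X (insSet I (fun j => a j) s) (insSet I (fun j => b j) t))
      (fun j => a j) (fun j => b j)

/-- The operator obtained from `X` by permuting the tensor factors according to `π`. -/
def permuteMat {d n : ℕ} (π : Equiv.Perm (Fin n)) (X : Mat d n) : Mat d n :=
  fun a b => X (a ∘ π) (b ∘ π)

/-- Tensor product of an operator on the first `m` qudits with one on the last `n` qudits. -/
def tensorMN {d m n : ℕ} (A : Mat d m) (B : Mat d n) : Mat d (m + n) :=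
  fun a b =>
    A (fun i => a (Fin.castAdd n i)) (fun i => b (Fin.castAdd n i)) *
    B (fun j => a (Fin.natAdd m j)) (fun j => b (Fin.natAdd m j))

/-- Partial trace of an operator on `m + n` qudits over the last `n` qudits. -/
noncomputable def ptraceLast {d m n : ℕ} (X : Mat d (m + n)) : Mat d m :=
  fun a b => ∑ k : Cfg d n, X (Fin.append a k) (Fin.append b k)

/-- Partial trace of an operator on `m + n` qudits over the first `m` qudits. -/
noncomputable def ptraceFirst {d m n : ℕ} (X : Mat d (m + n)) : Mat d n :=
  fun a b => ∑ k : Cfg d m, X (Fin.append k a) (Fin.append k b)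

/-- `n`-fold tensor product `σ₁ ⊗ ⋯ ⊗ σₙ` of single-qudit operators. -/
def tensorAll {d n : ℕ} (σs : Fin n → Matrix (Fin d) (Fin d) ℂ) : Mat d n :=
  fun a b => ∏ i, σs i (a i) (b i)

/-- `I_d^{(i)} ⊗ K`: the identity on the `i`-th qudit tensored with an operator `K`
on the remaining qudits. -/
def idTensorAt {d n : ℕ} (i : Fin n)
    (K : Matrix ({j : Fin n // j ≠ i} → Fin d) ({j : Fin n // j ≠ i} → Fin d) ℂ) :
    Mat d n :=
  fun a b => if a i = b i then K (fun j => a j) (fun j => b j) else 0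

/-- `K ⊗ identity`: an operator acting only on the qudits in `I`. -/
def embedOn {d n : ℕ} (I : Finset (Fin n))
    (K : Matrix ({j : Fin n // j ∈ I} → Fin d) ({j : Fin n // j ∈ I} → Fin d) ℂ) :
    Mat d n :=
  fun a b => if (∀ j, j ∉ I → a j = b j) then K (fun j => a j) (fun j => b j) else 0

/-- The `n`-th tensor power `φ^{⊗n}` of a single-qudit linear map `φ`. -/
noncomputable def tensorPowMap {d n : ℕ}
    (φ : Matrix (Fin d) (Fin d) ℂ → Matrix (Fin d) (Fin d) ℂ) (X : Mat d n) : Mat d n :=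
  fun a b => ∑ s : Cfg d n, ∑ t : Cfg d n,
    X s t * ∏ j, φ (Matrix.single (s j) (t j) 1) (a j) (b j)

/-- The `1 → 1` norm of a map on single-qudit operators. -/
noncomputable def norm1to1 {d : ℕ}
    (F : Matrix (Fin d) (Fin d) ℂ → Matrix (Fin d) (Fin d) ℂ) : ℝ :=
  sSup { r | ∃ ρ : Matrix (Fin d) (Fin d) ℂ, IsState ρ ∧ r = traceNorm (F ρ) }

/-- The diamond norm of a map on single-qudit operators. -/
noncomputable def diamondNorm {d : ℕ}
    (F : Matrix (Fin d) (Fin d) ℂ → Matrix (Fin d) (Fin d) ℂ) : ℝ :=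
  sSup { r | ∃ ρ : Matrix (Fin d × Fin d) (Fin d × Fin d) ℂ, IsState ρ ∧
    r = traceNorm (extendMap F ρ) }

/-- The contraction coefficient (`W₁ → W₁` norm) of a map on `n`-qudit operators. -/
noncomputable def W1toW1 {d n : ℕ} (Φ : Mat d n → Mat d n) : ℝ :=
  sSup { r | ∃ X : Mat d n, X.IsHermitian ∧ X.trace = 0 ∧ W1 X ≤ 1 ∧ r = W1 (Φ X) }

/-- The von Neumann entropy `S(ρ) = -Tr[ρ ln ρ]` (natural logarithm). -/
noncomputable def vnEntropy {ι : Type} [Fintype ι] [DecidableEq ι] (ρ : Matrix ι ι ℂ) : ℝ :=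
  if h : ρ.IsHermitian then -∑ i, h.eigenvalues i * Real.log (h.eigenvalues i) else 0

/-- The logarithm of a self-adjoint matrix, via the spectral decomposition. -/
noncomputable def matLog {ι : Type} [Fintype ι] [DecidableEq ι] (ρ : Matrix ι ι ℂ) :
    Matrix ι ι ℂ :=
  if h : ρ.IsHermitian then
    (h.eigenvectorUnitary : Matrix ι ι ℂ) *
      Matrix.diagonal (fun i => (Real.log (h.eigenvalues i) : ℂ)) *
      (star (h.eigenvectorUnitary : Matrix ι ι ℂ))
  else 0

/-- The quantum relative entropy `S(ρ‖σ) = Tr[ρ (ln ρ - ln σ)]`. -/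
noncomputable def relEntropy {ι : Type} [Fintype ι] [DecidableEq ι]
    (ρ σ : Matrix ι ι ℂ) : ℝ :=
  ((ρ * (matLog ρ - matLog σ)).trace).re

/-- The Hamming distance between two configurations. -/
def hamming {d n : ℕ} (x y : Cfg d n) : ℕ :=
  (Finset.univ.filter (fun i => x i ≠ y i)).card

/-- Probability distributions on a finite set. -/
def IsProb {α : Type} [Fintype α] (p : α → ℝ) : Prop :=
  (∀ x, 0 ≤ p x) ∧ ∑ x, p x = 1

/-- Couplings of two probability distributions. -/
def IsCoupling {α : Type} [Fintype α] (π : α × α → ℝ) (p q : α → ℝ) : Prop :=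
  IsProb π ∧ (∀ x, ∑ y, π (x, y) = p x) ∧ (∀ y, ∑ x, π (x, y) = q y)

/-- The classical Wasserstein distance of order 1 with respect to the Hamming distance. -/
noncomputable def classicalW1 {d n : ℕ} (p q : Cfg d n → ℝ) : ℝ :=
  sInf { c | ∃ π : Cfg d n × Cfg d n → ℝ, IsCoupling π p q ∧
    c = ∑ x : Cfg d n, ∑ y : Cfg d n, (hamming x y : ℝ) * π (x, y) }

/-- The Lipschitz constant of a function on `[d]^n` with respect to the Hamming distance. -/
noncomputable def classicalLip {d n : ℕ} (f : Cfg d n → ℝ) : ℝ :=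
  sSup { r | ∃ x y : Cfg d n, x ≠ y ∧ r = |f x - f y| / (hamming x y : ℝ) }



/-!
Let `Dᵢ X = d⁻¹ (Iᵢ ⊗ Trᵢ X)` replace qudit `i` by the maximally mixed state. The operator
`Iᵢ ⊗ Trᵢ M` is the sum of the `d²` conjugations of `M` by the matrix units `|u⟩⟨s|` on qudit `i`,
whose diagonal part `∑ₛ |s⟩⟨s|` is the identity; the operator Cauchy–Schwarz inequality
`(∑ₛ Aₛ) M (∑ₛ Aₛ)ᴴ ≤ d ∑ₛ Aₛ M Aₛᴴ` then gives `Dᵢ ρ ≥ ρ / d²` for `ρ ≥ 0`, so that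
`‖ρ - Dᵢ ρ‖₁ ≤ 2 (1 - 1/d²)` for every state `ρ`.

If two states `τ₁, τ₂` have the same partial trace over `I`, applying the maps `Dᵢ`, `i ∈ I`, one at
a time makes them equal, and telescoping writes `τ₁ - τ₂` as a sum over `i ∈ I` of the operators
`(σ₁ - Dᵢ σ₁) - (σ₂ - Dᵢ σ₂)`, each annihilated by `Trᵢ` and of trace norm at most `4 (1 - 1/d²)`.
A channel acting on the qudits in `I` is trace preserving, so `Φ(ρ)` and `ρ` are such a pair.
-/

open Matrix
open scoped MatrixOrder

section TraceNorm

variable {ι : Type} [Fintype ι] [DecidableEq ι]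

lemma _root_.Matrix.IsHermitian.trace_cfc {A : Matrix ι ι ℂ} (hA : A.IsHermitian) (f : ℝ → ℝ) :
    (cfc f A).trace = ∑ i, (f (hA.eigenvalues i) : ℂ) := by
  rw [hA.cfc_eq, IsHermitian.cfc, Unitary.conjStarAlgAut_apply, trace_mul_cycle,
    Unitary.coe_star_mul_self, one_mul, trace_diagonal]
  rfl

lemma traceNorm_eq_sum_abs_eigenvalues {A : Matrix ι ι ℂ} (hA : A.IsHermitian) :
    traceNorm A = ∑ i, |hA.eigenvalues i| := by
  have hsq : Aᴴ * A = cfc (fun x : ℝ => x ^ 2) A := by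
    rw [cfc_pow_id (R := ℝ) A 2 hA.isSelfAdjoint, hA.eq, sq]
  have hnorm : traceNorm A = (cfc Real.sqrt (Aᴴ * A)).trace.re := by
    rw [(posSemidef_conjTranspose_mul_self A).1.cfc_eq]
    rfl
  rw [hnorm, hsq, ← cfc_comp Real.sqrt (fun x : ℝ => x ^ 2) A, hA.trace_cfc]
  simp [Real.sqrt_sq_eq_abs]

lemma traceNorm_nonneg {A : Matrix ι ι ℂ} (hA : A.IsHermitian) : 0 ≤ traceNorm A := by
  rw [traceNorm_eq_sum_abs_eigenvalues hA]
  positivity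

lemma re_trace_mul_nonneg {A B : Matrix ι ι ℂ} (hA : A.PosSemidef) (hB : B.PosSemidef) :
    0 ≤ (A * B).trace.re := by
  obtain ⟨C, rfl⟩ := CStarAlgebra.nonneg_iff_eq_star_mul_self.mp hB.nonneg
  rw [← mul_assoc, trace_mul_cycle]
  exact (Complex.nonneg_iff.mp (hA.mul_mul_conjTranspose_same C).trace_nonneg).1

lemma re_trace_mul_eq_sum_eigenvalues {Z : Matrix ι ι ℂ} (hZ : Z.IsHermitian)
    (W : Matrix ι ι ℂ) :
    (W * Z).trace.re = ∑ i, ((star (hZ.eigenvectorUnitary : Matrix ι ι ℂ) * W *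
      hZ.eigenvectorUnitary) i i).re * hZ.eigenvalues i := by
  conv_lhs => rw [hZ.spectral_theorem, Unitary.conjStarAlgAut_apply, ← mul_assoc, ← mul_assoc,
    trace_mul_cycle, ← mul_assoc]
  simp [trace, mul_diagonal, Complex.mul_re]

lemma re_trace_mul_le_traceNorm {Z W : Matrix ι ι ℂ} (hZ : Z.IsHermitian) (hW₁ : -1 ≤ W)
    (hW₂ : W ≤ 1) : (W * Z).trace.re ≤ traceNorm Z := by
  set U : Matrix ι ι ℂ := (hZ.eigenvectorUnitary : Matrix ι ι ℂ)
  have hU : star U * U = 1 := Unitary.coe_star_mul_self _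
  have h₁ : -1 ≤ star U * W * U := by
    simpa [hU] using star_left_conjugate_le_conjugate hW₁ U
  have h₂ : star U * W * U ≤ 1 := by
    simpa [hU] using star_left_conjugate_le_conjugate hW₂ U
  rw [re_trace_mul_eq_sum_eigenvalues hZ, traceNorm_eq_sum_abs_eigenvalues hZ]
  refine Finset.sum_le_sum fun i _ => ?_
  have hlo := (Complex.nonneg_iff.mp ((le_iff.mp h₁).diag_nonneg (i := i))).1
  have hhi := (Complex.nonneg_iff.mp ((le_iff.mp h₂).diag_nonneg (i := i))).1
  simp only [Matrix.sub_apply, Matrix.neg_apply, one_apply_eq, Complex.sub_re, Complex.neg_re,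
    Complex.one_re] at hlo hhi
  calc ((star U * W * U) i i).re * hZ.eigenvalues i
      ≤ |((star U * W * U) i i).re| * |hZ.eigenvalues i| := by
        rw [← abs_mul]; exact le_abs_self _
    _ ≤ 1 * |hZ.eigenvalues i| := by gcongr; exact abs_le.mpr ⟨by linarith, by linarith⟩
    _ = |hZ.eigenvalues i| := one_mul _

lemma exists_re_trace_mul_eq_traceNorm {Z : Matrix ι ι ℂ} (hZ : Z.IsHermitian) :
    ∃ W : Matrix ι ι ℂ, -1 ≤ W ∧ W ≤ 1 ∧ (W * Z).trace.re = traceNorm Z := by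
  set U : Matrix ι ι ℂ := (hZ.eigenvectorUnitary : Matrix ι ι ℂ)
  have hU₁ : star U * U = 1 := Unitary.coe_star_mul_self _
  have hU₂ : U * star U = 1 := Unitary.coe_mul_star_self _
  set w : ι → ℝ := fun i => if 0 ≤ hZ.eigenvalues i then 1 else -1
  have hw : ∀ i, 0 ≤ w i + 1 ∧ 0 ≤ 1 - w i ∧ w i * hZ.eigenvalues i = |hZ.eigenvalues i| :=
    fun i => by
      by_cases h : 0 ≤ hZ.eigenvalues i
      · simp [w, h, abs_of_nonneg h]
      · simp [w, h, abs_of_neg (not_le.mp h)]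
  have h₁ : (-1 : Matrix ι ι ℂ) ≤ diagonal (fun i => (w i : ℂ)) := by
    rw [le_iff, ← diagonal_one, diagonal_neg, diagonal_sub, posSemidef_diagonal_iff]
    intro i
    simpa [← Complex.ofReal_one, ← Complex.ofReal_add, Complex.zero_le_real] using (hw i).1
  have h₂ : diagonal (fun i => (w i : ℂ)) ≤ 1 := by
    rw [le_iff, ← diagonal_one, diagonal_sub, posSemidef_diagonal_iff]
    intro i
    simpa [← Complex.ofReal_one, ← Complex.ofReal_sub, Complex.zero_le_real] using (hw i).2.1
  refine ⟨U * diagonal (fun i => (w i : ℂ)) * star U, ?_, ?_, ?_⟩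
  · simpa [hU₂] using star_right_conjugate_le_conjugate h₁ U
  · simpa [hU₂] using star_right_conjugate_le_conjugate h₂ U
  · have hconj : star U * (U * diagonal (fun i => (w i : ℂ)) * star U) * U =
        diagonal (fun i => (w i : ℂ)) := by
      simp only [← mul_assoc, hU₁, one_mul]
      rw [mul_assoc, hU₁, mul_one]
    rw [re_trace_mul_eq_sum_eigenvalues hZ, traceNorm_eq_sum_abs_eigenvalues hZ, hconj]
    simp [(hw _).2.2]

lemma traceNorm_zero : traceNorm (0 : Matrix ι ι ℂ) = 0 := by
  obtain ⟨W, -, -, hW⟩ := exists_re_trace_mul_eq_traceNorm (isHermitian_zero (α := ℂ) (n := ι))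
  simpa using hW.symm

lemma traceNorm_add_le {A B : Matrix ι ι ℂ} (hA : A.IsHermitian) (hB : B.IsHermitian) :
    traceNorm (A + B) ≤ traceNorm A + traceNorm B := by
  obtain ⟨W, hW₁, hW₂, hW⟩ := exists_re_trace_mul_eq_traceNorm (hA.add hB)
  rw [← hW, mul_add, trace_add, Complex.add_re]
  exact add_le_add (re_trace_mul_le_traceNorm hA hW₁ hW₂) (re_trace_mul_le_traceNorm hB hW₁ hW₂)

lemma traceNorm_sub_le {A B : Matrix ι ι ℂ} (hA : A.IsHermitian) (hB : B.IsHermitian) :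
    traceNorm (A - B) ≤ traceNorm A + traceNorm B := by
  obtain ⟨W, hW₁, hW₂, hW⟩ := exists_re_trace_mul_eq_traceNorm (hA.sub hB)
  have hB' := re_trace_mul_le_traceNorm hB (W := -W) (by simpa using neg_le_neg hW₂)
    (by simpa using neg_le_neg hW₁)
  rw [neg_mul, trace_neg, Complex.neg_re] at hB'
  rw [← hW, mul_sub, trace_sub, Complex.sub_re]
  linarith [re_trace_mul_le_traceNorm hA hW₁ hW₂]

/-- With `W` the sign of `Z`, `‖Z‖₁ = Re Tr (W Z) = Re Tr ((1 + W) Z) ≤ Re Tr ((1 + W) P) ≤ 2 Tr P`. -/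
lemma traceNorm_le_two_mul_re_trace {Z P : Matrix ι ι ℂ} (hZ : Z.IsHermitian)
    (hZ₀ : Z.trace = 0) (hP : P.PosSemidef) (hZP : Z ≤ P) : traceNorm Z ≤ 2 * P.trace.re := by
  obtain ⟨W, hW₁, hW₂, hW⟩ := exists_re_trace_mul_eq_traceNorm hZ
  have h₁ : 0 ≤ ((W + 1) * (P - Z)).trace.re :=
    re_trace_mul_nonneg (by simpa [le_iff] using hW₁) (le_iff.mp hZP)
  have h₂ : 0 ≤ ((1 - W) * P).trace.re := re_trace_mul_nonneg (le_iff.mp hW₂) hP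
  simp only [add_mul, mul_sub, sub_mul, one_mul, trace_add, trace_sub, Complex.add_re,
    Complex.sub_re, hZ₀, Complex.zero_re] at h₁ h₂
  linarith

end TraceNorm

lemma sum_mul_mul_conjTranspose_sum_le {𝕜 ι κ : Type*} [RCLike 𝕜] [Fintype ι] (s : Finset κ)
    (A : κ → Matrix ι ι 𝕜) {M : Matrix ι ι 𝕜} (hM : M.PosSemidef) :
    (∑ k ∈ s, A k) * M * (∑ k ∈ s, A k)ᴴ ≤ s.card • ∑ k ∈ s, A k * M * (A k)ᴴ := by
  set X := s.card • ∑ k ∈ s, A k * M * (A k)ᴴ - (∑ k ∈ s, A k) * M * (∑ k ∈ s, A k)ᴴ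
  have hX : X + X = ∑ k ∈ s, ∑ l ∈ s, (A k - A l) * M * (A k - A l)ᴴ := by
    simp only [X, conjTranspose_sum, conjTranspose_sub, sub_mul, mul_sub, Finset.sum_sub_distrib,
      Finset.sum_mul, Finset.mul_sum, Finset.sum_const, ← Finset.smul_sum]
    rw [Finset.sum_comm (s := s) (t := s) (f := fun l k => A k * M * (A l)ᴴ)]
    abel
  have h2X : (X + X).PosSemidef := hX ▸
    posSemidef_sum _ fun k _ => posSemidef_sum _ fun l _ => hM.mul_mul_conjTranspose_same _
  have hXpos : X.PosSemidef := by
    simpa [← two_smul ℝ X, smul_smul] using h2X.smul (a := (2⁻¹ : ℝ)) (by norm_num)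
  exact le_iff.mpr hXpos

section Depolarize

variable {d n : ℕ}

@[simp] lemma ins_self (i : Fin n) (a : {j : Fin n // j ≠ i} → Fin d) (s : Fin d) :
    ins i a s i = s := by
  simp [ins]

@[simp] lemma ins_coe (i : Fin n) (a : {j : Fin n // j ≠ i} → Fin d) (s : Fin d)
    (j : {j : Fin n // j ≠ i}) : ins i a s j = a j := by
  simp [ins, j.2]

lemma ins_eq_update (i : Fin n) (a : Cfg d n) (s : Fin d) :
    ins i (fun j => a j) s = Function.update a i s := by
  funext j
  rcases eq_or_ne j i with rfl | h <;> simp [ins, *]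

lemma sum_cfg_eq_sum_ins {M : Type*} [AddCommMonoid M] (i : Fin n) (f : Cfg d n → M) :
    ∑ x, f x = ∑ s, ∑ a, f (ins i a s) := by
  rw [← (Equiv.funSplitAt i (Fin d)).symm.sum_comp, Fintype.sum_prod_type]
  congr! with s _ a _
  funext j
  rcases eq_or_ne j i with rfl | h <;> simp [ins, *]

lemma trace_ptrace (i : Fin n) (X : Mat d n) : (ptrace i X).trace = X.trace := by
  rw [trace, trace, sum_cfg_eq_sum_ins i, Finset.sum_comm]
  rfl

lemma ptrace_add (i : Fin n) (X Y : Mat d n) : ptrace i (X + Y) = ptrace i X + ptrace i Y := by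
  ext a b; simp [ptrace, Finset.sum_add_distrib]

lemma ptrace_sub (i : Fin n) (X Y : Mat d n) : ptrace i (X - Y) = ptrace i X - ptrace i Y := by
  ext a b; simp [ptrace]

lemma ptrace_smul (i : Fin n) (r : ℝ) (X : Mat d n) : ptrace i (r • X) = r • ptrace i X := by
  ext a b; simp [ptrace, Finset.smul_sum]

lemma trace_idTensorAt (i : Fin n)
    (K : Matrix ({j : Fin n // j ≠ i} → Fin d) ({j : Fin n // j ≠ i} → Fin d) ℂ) :
    (idTensorAt i K).trace = d * K.trace := by
  rw [trace, sum_cfg_eq_sum_ins i]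
  simp [idTensorAt, trace]

lemma ptrace_idTensorAt (i : Fin n)
    (K : Matrix ({j : Fin n // j ≠ i} → Fin d) ({j : Fin n // j ≠ i} → Fin d) ℂ) :
    ptrace i (idTensorAt i K) = d • K := by
  ext a b
  simp [ptrace, idTensorAt]

/-- The operator `|u⟩⟨s| ⊗ 1` acting on qudit `i`. -/
def matrixUnitAt (i : Fin n) (u s : Fin d) : Mat d n :=
  fun a b => if a i = u then (if b = Function.update a i s then 1 else 0) else 0

lemma matrixUnitAt_mul_apply (i : Fin n) (u s : Fin d) (X : Mat d n) (a b : Cfg d n) :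
    (matrixUnitAt i u s * X) a b = if a i = u then X (Function.update a i s) b else 0 := by
  simp [matrixUnitAt, Matrix.mul_apply, ite_mul]

lemma mul_conjTranspose_matrixUnitAt_apply (i : Fin n) (u s : Fin d) (X : Mat d n)
    (a b : Cfg d n) :
    (X * (matrixUnitAt i u s)ᴴ) a b = if b i = u then X a (Function.update b i s) else 0 := by
  by_cases h : b i = u <;> simp [matrixUnitAt, Matrix.mul_apply, h]

lemma sum_matrixUnitAt_self (i : Fin n) : ∑ s, (matrixUnitAt i s s : Mat d n) = 1 := by
  ext a b
  simp [matrixUnitAt, Matrix.sum_apply, Matrix.one_apply, eq_comm]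

lemma sum_matrixUnitAt_conj (i : Fin n) (X : Mat d n) :
    ∑ s, ∑ u, matrixUnitAt i u s * X * (matrixUnitAt i u s)ᴴ = idTensorAt i (ptrace i X) := by
  ext a b
  simp only [Matrix.sum_apply, mul_conjTranspose_matrixUnitAt_apply, matrixUnitAt_mul_apply,
    idTensorAt, ptrace, ins_eq_update]
  rw [Finset.sum_comm]
  simp [eq_comm]

lemma le_card_smul_idTensorAt_ptrace (i : Fin n) {M : Mat d n} (hM : M.PosSemidef) :
    M ≤ d • idTensorAt i (ptrace i M) := by
  calc M = (∑ s, matrixUnitAt i s s) * M * (∑ s, matrixUnitAt i s s)ᴴ := by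
        simp [sum_matrixUnitAt_self]
    _ ≤ d • ∑ s, matrixUnitAt i s s * M * (matrixUnitAt i s s)ᴴ := by
        simpa using sum_mul_mul_conjTranspose_sum_le Finset.univ (fun s => matrixUnitAt i s s) hM
    _ ≤ d • ∑ s, ∑ u, matrixUnitAt i u s * M * (matrixUnitAt i u s)ᴴ := by
        gcongr with s
        exact Finset.single_le_sum (fun u _ => (hM.mul_mul_conjTranspose_same _).nonneg)
          (Finset.mem_univ s)
    _ = d • idTensorAt i (ptrace i M) := by rw [sum_matrixUnitAt_conj]

def depolarize (i : Fin n) (X : Mat d n) : Mat d n :=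
  (d : ℝ)⁻¹ • idTensorAt i (ptrace i X)

lemma depolarize_apply (i : Fin n) (X : Mat d n) (x y : Cfg d n) :
    depolarize i X x y = (d : ℝ)⁻¹ •
      if x i = y i then ∑ u, X (Function.update x i u) (Function.update y i u) else 0 := by
  simp [depolarize, idTensorAt, ptrace, ins_eq_update]

lemma smul_le_depolarize (i : Fin n) {M : Mat d n} (hM : M.PosSemidef) :
    ((d : ℝ) ^ 2)⁻¹ • M ≤ depolarize i M := by
  rw [le_iff]
  convert (le_iff.mp (le_card_smul_idTensorAt_ptrace i hM)).smul (a := ((d : ℝ) ^ 2)⁻¹)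
    (by positivity) using 1
  rw [depolarize, smul_sub, ← Nat.cast_smul_eq_nsmul ℝ, smul_smul]
  congr 2
  field_simp

lemma posSemidef_depolarize (i : Fin n) {M : Mat d n} (hM : M.PosSemidef) :
    (depolarize i M).PosSemidef :=
  ((hM.smul (by positivity)).nonneg.trans (smul_le_depolarize i hM)).posSemidef

variable [NeZero d]

lemma trace_depolarize (i : Fin n) (X : Mat d n) : (depolarize i X).trace = X.trace := by
  rw [depolarize, trace_smul, trace_idTensorAt, trace_ptrace, Complex.real_smul]
  push_cast
  rw [inv_mul_cancel_left₀ (by exact_mod_cast NeZero.ne d)]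

lemma ptrace_depolarize (i : Fin n) (X : Mat d n) :
    ptrace i (depolarize i X) = ptrace i X := by
  rw [depolarize, ptrace_smul, ptrace_idTensorAt, ← Nat.cast_smul_eq_nsmul ℝ, smul_smul,
    inv_mul_cancel₀ (by exact_mod_cast NeZero.ne d), one_smul]

lemma IsState.depolarize {τ : Mat d n} (hτ : IsState τ) (i : Fin n) :
    IsState (depolarize i τ) :=
  ⟨posSemidef_depolarize i hτ.1, by rw [trace_depolarize, hτ.2]⟩

lemma one_sub_inv_sq_nonneg : 0 ≤ 1 - ((d : ℝ) ^ 2)⁻¹ := by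
  have hd : (1 : ℝ) ≤ d := by exact_mod_cast Nat.one_le_iff_ne_zero.mpr (NeZero.ne d)
  exact sub_nonneg.mpr (inv_le_one_of_one_le₀ (by nlinarith))

lemma traceNorm_sub_depolarize_le {τ : Mat d n} (hτ : IsState τ) (i : Fin n) :
    traceNorm (τ - depolarize i τ) ≤ 2 * (1 - ((d : ℝ) ^ 2)⁻¹) := by
  have hle : τ - depolarize i τ ≤ (1 - ((d : ℝ) ^ 2)⁻¹) • τ := by
    rw [le_iff, sub_smul, one_smul, sub_sub_sub_cancel_left]
    exact le_iff.mp (smul_le_depolarize i hτ.1)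
  have hZ : (τ - depolarize i τ).trace = 0 := by rw [trace_sub, trace_depolarize, sub_self]
  have := traceNorm_le_two_mul_re_trace (hτ.1.1.sub (posSemidef_depolarize i hτ.1).1) hZ
    (hτ.1.smul one_sub_inv_sq_nonneg) hle
  rwa [trace_smul, hτ.2, Complex.real_smul, mul_one, Complex.ofReal_re] at this

end Depolarize

section PartialTraceSet

variable {d n : ℕ}

lemma ptraceSet_empty_apply (X : Mat d n) (a b : Cfg d n) :
    ptraceSet ∅ X (fun j => a j) (fun j => b j) = X a b := by
  have h : ∀ (x : Cfg d n) s, insSet ∅ (fun j => x j) s = x := fun x s => by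
    funext j; simp [insSet]
  simp [ptraceSet, h]

lemma eq_of_ptraceSet_empty_eq {X Y : Mat d n} (h : ptraceSet ∅ X = ptraceSet ∅ Y) : X = Y := by
  ext a b
  rw [← ptraceSet_empty_apply X, ← ptraceSet_empty_apply Y, h]

def insertSplitEquiv {i : Fin n} {J : Finset (Fin n)} (hi : i ∉ J) :
    ({j : Fin n // j ∈ insert i J} → Fin d) ≃ Fin d × ({j : Fin n // j ∈ J} → Fin d) where
  toFun t := (t ⟨i, Finset.mem_insert_self i J⟩, fun j => t ⟨j, Finset.mem_insert_of_mem j.2⟩)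
  invFun p j := if h : (j : Fin n) ∈ J then p.2 ⟨j, h⟩ else p.1
  left_inv t := by
    funext ⟨j, hj⟩
    by_cases h : j ∈ J
    · simp [h]
    · obtain rfl : j = i := by simpa [h] using hj
      simp [h]
  right_inv p := by
    ext j
    · simp [hi]
    · simp [j.2]

lemma update_insSet {i : Fin n} {J : Finset (Fin n)} (hi : i ∉ J)
    (c : {j : Fin n // j ∉ J} → Fin d) (s : {j : Fin n // j ∈ J} → Fin d) (u : Fin d) :
    Function.update (insSet J c s) i u =
      insSet (insert i J) (fun j => c ⟨j, fun h => j.2 (Finset.mem_insert_of_mem h)⟩)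
        ((insertSplitEquiv hi).symm (u, s)) := by
  funext j
  by_cases hji : j = i
  · subst hji; simp [insSet, insertSplitEquiv, hi]
  · by_cases hj : j ∈ J <;> simp [insSet, insertSplitEquiv, hji, hj]

lemma ptraceSet_depolarize_apply {i : Fin n} {J : Finset (Fin n)} (hi : i ∉ J) (X : Mat d n)
    (a b : {j : Fin n // j ∉ J} → Fin d) :
    ptraceSet J (depolarize i X) a b = (d : ℝ)⁻¹ •
      if a ⟨i, hi⟩ = b ⟨i, hi⟩ then
        ptraceSet (insert i J) X (fun j => a ⟨j, fun h => j.2 (Finset.mem_insert_of_mem h)⟩)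
          (fun j => b ⟨j, fun h => j.2 (Finset.mem_insert_of_mem h)⟩)
      else 0 := by
  have hins : ∀ (c : {j : Fin n // j ∉ J} → Fin d) s, insSet J c s i = c ⟨i, hi⟩ := fun c s => by
    simp [insSet, hi]
  simp only [ptraceSet, depolarize_apply, hins, ← Finset.smul_sum]
  split_ifs
  · rw [← (insertSplitEquiv hi).symm.sum_comp, Fintype.sum_prod_type, Finset.sum_comm]
    simp [update_insSet hi]
  · simp

end PartialTraceSet

section SiteDecomposition

variable {d n : ℕ}

def IsSiteDecomposition (X : Mat d n) (Y : Fin n → Mat d n) : Prop :=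
  (∀ i, (Y i).IsHermitian) ∧ (∀ i, ptrace i (Y i) = 0) ∧ X = ∑ i, Y i

lemma W1_le_of_isSiteDecomposition {X : Mat d n} {Y : Fin n → Mat d n}
    (hY : IsSiteDecomposition X Y) : W1 X ≤ 1 / 2 * ∑ i, traceNorm (Y i) := by
  refine csInf_le ⟨0, ?_⟩ ⟨Y, hY.1, hY.2.1, hY.2.2, rfl⟩
  rintro r ⟨Y', hY', -, -, rfl⟩
  have := Finset.sum_nonneg fun i (_ : i ∈ Finset.univ) => traceNorm_nonneg (hY' i)
  positivity

lemma isSiteDecomposition_zero : IsSiteDecomposition (0 : Mat d n) 0 :=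
  ⟨fun _ => isHermitian_zero, fun _ => by ext; simp [ptrace], by simp⟩

lemma IsSiteDecomposition.add {X X' : Mat d n} {Y Y' : Fin n → Mat d n}
    (hY : IsSiteDecomposition X Y) (hY' : IsSiteDecomposition X' Y') :
    IsSiteDecomposition (X + X') (Y + Y') :=
  ⟨fun i => (hY.1 i).add (hY'.1 i), fun i => by simp [ptrace_add, hY.2.1 i, hY'.2.1 i],
    by simp [Finset.sum_add_distrib, hY.2.2, hY'.2.2]⟩

lemma isSiteDecomposition_single {Z : Mat d n} {i : Fin n} (hZ : Z.IsHermitian)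
    (hZi : ptrace i Z = 0) : IsSiteDecomposition Z (Pi.single i Z) := by
  refine ⟨fun j => ?_, fun j => ?_, by simp⟩
  · obtain rfl | hj := eq_or_ne j i
    · simpa using hZ
    · simp [hj]
  · obtain rfl | hj := eq_or_ne j i
    · simpa using hZi
    · ext; simp [hj, ptrace]

lemma sum_traceNorm_single (i : Fin n) (Z : Mat d n) :
    ∑ j, traceNorm ((Pi.single i Z : Fin n → Mat d n) j) = traceNorm Z := by
  rw [Finset.sum_congr rfl fun j _ =>
    Pi.apply_single (fun _ => traceNorm) (fun _ => traceNorm_zero) i Z j, Finset.sum_pi_single']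
  simp

variable [NeZero d]

lemma exists_isSiteDecomposition_of_ptraceSet_eq (I : Finset (Fin n)) {τ₁ τ₂ : Mat d n}
    (h₁ : IsState τ₁) (h₂ : IsState τ₂) (h : ptraceSet I τ₁ = ptraceSet I τ₂) :
    ∃ Y, IsSiteDecomposition (τ₁ - τ₂) Y ∧
      ∑ i, traceNorm (Y i) ≤ 4 * I.card * (1 - ((d : ℝ) ^ 2)⁻¹) := by
  induction I using Finset.induction_on generalizing τ₁ τ₂ with
  | empty =>
    rw [eq_of_ptraceSet_empty_eq h, sub_self]
    exact ⟨0, isSiteDecomposition_zero, by simp [traceNorm_zero]⟩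
  | insert i J hi ih =>
    have hJ : ptraceSet J (depolarize i τ₁) = ptraceSet J (depolarize i τ₂) := by
      ext a b
      rw [ptraceSet_depolarize_apply hi, ptraceSet_depolarize_apply hi, h]
    obtain ⟨Y, hY, hYn⟩ := ih (h₁.depolarize i) (h₂.depolarize i) hJ
    have hH₁ := h₁.1.1.sub (h₁.depolarize i).1.1
    have hH₂ := h₂.1.1.sub (h₂.depolarize i).1.1
    set Z := (τ₁ - depolarize i τ₁) - (τ₂ - depolarize i τ₂)
    have hZ := isSiteDecomposition_single (hH₁.sub hH₂)
      (show ptrace i Z = 0 by simp [Z, ptrace_sub, ptrace_depolarize])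
    have hZn : traceNorm Z ≤ 4 * (1 - ((d : ℝ) ^ 2)⁻¹) := by
      linarith [traceNorm_sub_le hH₁ hH₂, traceNorm_sub_depolarize_le h₁ i,
        traceNorm_sub_depolarize_le h₂ i]
    refine ⟨Y + Pi.single i Z, by convert hY.add hZ using 1; abel, ?_⟩
    simp only [Pi.add_apply]
    calc ∑ j, traceNorm (Y j + (Pi.single i Z : Fin n → Mat d n) j)
        ≤ ∑ j, (traceNorm (Y j) + traceNorm ((Pi.single i Z : Fin n → Mat d n) j)) :=
          Finset.sum_le_sum fun j _ => traceNorm_add_le (hY.1 j) (hZ.1 j)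
      _ = ∑ j, traceNorm (Y j) + traceNorm Z := by
          rw [Finset.sum_add_distrib, sum_traceNorm_single]
      _ ≤ 4 * (insert i J).card * (1 - ((d : ℝ) ^ 2)⁻¹) := by
          rw [Finset.card_insert_of_notMem hi]; push_cast; linarith

lemma W1_sub_le_of_ptraceSet_eq (I : Finset (Fin n)) {τ₁ τ₂ : Mat d n} (h₁ : IsState τ₁)
    (h₂ : IsState τ₂) (h : ptraceSet I τ₁ = ptraceSet I τ₂) :
    W1 (τ₁ - τ₂) ≤ 2 * I.card * (1 - ((d : ℝ) ^ 2)⁻¹) := by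
  obtain ⟨Y, hY, hYn⟩ := exists_isSiteDecomposition_of_ptraceSet_eq I h₁ h₂ h
  linarith [W1_le_of_isSiteDecomposition hY]

end SiteDecomposition

section Channel

variable {d n : ℕ} {I : Finset (Fin n)}

@[simp] lemma insSet_coe_mem (a : {j : Fin n // j ∉ I} → Fin d)
    (s : {j : Fin n // j ∈ I} → Fin d) (j : {j : Fin n // j ∈ I}) : insSet I a s j = s j := by
  simp [insSet, j.2]

@[simp] lemma insSet_coe_notMem (a : {j : Fin n // j ∉ I} → Fin d)
    (s : {j : Fin n // j ∈ I} → Fin d) (j : {j : Fin n // j ∉ I}) : insSet I a s j = a j := by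
  simp [insSet, j.2]

lemma piEquivPiSubtypeProd_symm_apply_eq_insSet (a : {j : Fin n // j ∉ I} → Fin d)
    (s : {j : Fin n // j ∈ I} → Fin d) :
    (Equiv.piEquivPiSubtypeProd (· ∈ I) fun _ => Fin d).symm (s, a) = insSet I a s :=
  rfl

lemma trace_ptraceSet (X : Mat d n) : (ptraceSet I X).trace = X.trace := by
  rw [trace, trace, ← (Equiv.piEquivPiSubtypeProd (· ∈ I) fun _ => Fin d).symm.sum_comp,
    Fintype.sum_prod_type, Finset.sum_comm]
  rfl

lemma applyOn_insSet
    (φ : Matrix ({j : Fin n // j ∈ I} → Fin d) ({j : Fin n // j ∈ I} → Fin d) ℂ →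
      Matrix ({j : Fin n // j ∈ I} → Fin d) ({j : Fin n // j ∈ I} → Fin d) ℂ)
    (X : Mat d n) (a b : {j : Fin n // j ∉ I} → Fin d) (s t : {j : Fin n // j ∈ I} → Fin d) :
    applyOn I φ X (insSet I a s) (insSet I b t) =
      φ (fun s' t' => X (insSet I a s') (insSet I b t')) s t := by
  simp [applyOn]

variable (φ : Matrix ({j : Fin n // j ∈ I} → Fin d) ({j : Fin n // j ∈ I} → Fin d) ℂ →ₗ[ℂ]
    Matrix ({j : Fin n // j ∈ I} → Fin d) ({j : Fin n // j ∈ I} → Fin d) ℂ)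

lemma ptraceSet_applyOn (hφ : ∀ M, (φ M).trace = M.trace) (X : Mat d n) :
    ptraceSet I (applyOn I (fun M => φ M) X) = ptraceSet I X := by
  ext a b
  simp only [ptraceSet, applyOn_insSet]
  exact hφ _

lemma posSemidef_applyOn (hφ : ∀ (k : ℕ) (M : Matrix (({j : Fin n // j ∈ I} → Fin d) × Fin k)
      (({j : Fin n // j ∈ I} → Fin d) × Fin k) ℂ), M.PosSemidef →
      (extendMap (fun N => φ N) M).PosSemidef) {X : Mat d n} (hX : X.PosSemidef) :
    (applyOn I (fun M => φ M) X).PosSemidef := by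
  let e := (Equiv.piEquivPiSubtypeProd (· ∈ I) fun _ => Fin d).trans
    (Equiv.prodCongr (Equiv.refl _) (Fintype.equivFin _))
  have h : applyOn I (fun M => φ M) X =
      (extendMap (fun N => φ N) (X.submatrix e.symm e.symm)).submatrix e e := by
    ext a b
    simp [e, applyOn, extendMap, ← piEquivPiSubtypeProd_symm_apply_eq_insSet]
  rw [h]
  exact (hφ _ _ (hX.submatrix _)).submatrix _

lemma IsCPTP.isState_applyOn (hφ : IsCPTP φ) {ρ : Mat d n} (hρ : IsState ρ) :
    IsState (applyOn I (fun M => φ M) ρ) :=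
  ⟨posSemidef_applyOn φ hφ.1 hρ.1, by
    rw [← trace_ptraceSet, ptraceSet_applyOn φ hφ.2, trace_ptraceSet, hρ.2]⟩

end Channel

theorem stmt5_general {d n : ℕ} (hd : 2 ≤ d) (k : ℕ)
    (I : Finset (Fin n)) (hIk : I.card ≤ k)
    (φ : Matrix ({j : Fin n // j ∈ I} → Fin d) ({j : Fin n // j ∈ I} → Fin d) ℂ →ₗ[ℂ]
         Matrix ({j : Fin n // j ∈ I} → Fin d) ({j : Fin n // j ∈ I} → Fin d) ℂ)
    (hφ : IsCPTP φ) (ρ : Mat d n) (hρ : IsState ρ) :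
    W1 (applyOn I (fun M => φ M) ρ - ρ) ≤
      2 * (k : ℝ) * (((d : ℝ) ^ 2 - 1) / (d : ℝ) ^ 2) := by
  have : NeZero d := ⟨by omega⟩
  calc W1 (applyOn I (fun M => φ M) ρ - ρ) ≤ 2 * I.card * (1 - ((d : ℝ) ^ 2)⁻¹) :=
        W1_sub_le_of_ptraceSet_eq I (hφ.isState_applyOn φ hρ) hρ (ptraceSet_applyOn φ hφ.2 ρ)
    _ ≤ 2 * k * (1 - ((d : ℝ) ^ 2)⁻¹) := by gcongr; exact one_sub_inv_sq_nonneg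
    _ = 2 * (k : ℝ) * (((d : ℝ) ^ 2 - 1) / (d : ℝ) ^ 2) := by
        field_simp

theorem stmt5 {d n : ℕ} (hd : 2 ≤ d) (hn : 1 ≤ n) (k : ℕ)
    (I : Finset (Fin n)) (hIk : I.card ≤ k)
    (φ : Matrix ({j : Fin n // j ∈ I} → Fin d) ({j : Fin n // j ∈ I} → Fin d) ℂ →ₗ[ℂ]
         Matrix ({j : Fin n // j ∈ I} → Fin d) ({j : Fin n // j ∈ I} → Fin d) ℂ)
    (hφ : IsCPTP φ) (ρ : Mat d n) (hρ : IsState ρ) :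
    W1 (applyOn I (fun M => φ M) ρ - ρ) ≤
      2 * (k : ℝ) * (((d : ℝ) ^ 2 - 1) / (d : ℝ) ^ 2) :=
  stmt5_general hd k I hIk φ hφ ρ hρ

end QW1
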